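/- For every integer n ≥ 3 and all real x, y, the partial derivative in x of the continuous-analogue Pochhammer symbol satisfies x · (∂r̃/∂x)(x,y,n) = n · r̃(x,y,n) − ((n-1)² y / 2) · r̃(x, ((n-1)²/(n-2)²)·y, n-1), where for fixed y and n the function x ↦ r̃(x,y,n) is a polynomial in x and ∂r̃/∂x denotes its derivative. -/

import Mathlib

/-- The continuous-analogue Pochhammer symbol
`r̃(x,y,n) = Σ_{k=1}^{n} ((n-1)^{2(n-k)} / (2^{n-k} (n-k)!)) x^k y^{n-k}`,
with `r̃(x,y,0) = 1`. -/
noncomputable def rtilde (x y : ℝ) (n : ℕ) : ℝ :=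
  if n = 0 then 1 else
    ∑ k ∈ Finset.Icc 1 n,
      ((n : ℝ) - 1) ^ (2 * (n - k)) / (2 ^ (n - k) * (Nat.factorial (n - k) : ℝ))
        * x ^ k * y ^ (n - k)

/-!
Writing `t = (n-1)² y / 2`, the symbol `r̃(x,y,n)` is `x^n e_{n-1}(t/x)` with `e_m` the degree-`m`
truncated exponential series, and the rescaling `y ↦ ((n-1)²/(n-2)²) y` turns `r̃(·,·,n-1)` into the
same expression with the same `t` and `n-1` in place of `n`. The identity is then Euler's relation
`x ∂ₓ + t ∂ₜ = n` for this homogeneous polynomial, together with `∂ₜ e_m = e_{m-1}`.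
-/

open Finset

noncomputable def homogenizedTruncExp (x t : ℝ) (n : ℕ) : ℝ :=
  ∑ j ∈ range n, t ^ j / j.factorial * x ^ (n - j)

theorem hasDerivAt_homogenizedTruncExp (x t : ℝ) (n : ℕ) :
    HasDerivAt (fun u => homogenizedTruncExp u t n)
      (∑ j ∈ range n, t ^ j / j.factorial * ((n - j : ℕ) * x ^ (n - j - 1))) x :=
  HasDerivAt.fun_sum fun j _ => (hasDerivAt_pow (n - j) x).const_mul _

theorem mul_deriv_homogenizedTruncExp (x t : ℝ) (n : ℕ) :
    x * deriv (fun u => homogenizedTruncExp u t n) x =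
      n * homogenizedTruncExp x t n - t * homogenizedTruncExp x t (n - 1) := by
  rw [(hasDerivAt_homogenizedTruncExp x t n).deriv, eq_sub_iff_add_eq]
  cases n with
  | zero => simp [homogenizedTruncExp]
  | succ m =>
    have euler_term : ∀ j ∈ range (m + 1),
        x * (t ^ j / j.factorial * ((m + 1 - j : ℕ) * x ^ (m + 1 - j - 1)))
          = (m + 1 - j : ℕ) * (t ^ j / j.factorial * x ^ (m + 1 - j)) := by
      intro j hj
      rw [show m + 1 - j = (m - j) + 1 by grind, Nat.add_sub_cancel, pow_succ]
      ring
    have shifted_sum : t * homogenizedTruncExp x t m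
        = ∑ j ∈ range (m + 1), (j : ℝ) * (t ^ j / j.factorial * x ^ (m + 1 - j)) := by
      rw [sum_range_succ', homogenizedTruncExp, mul_sum]
      simp only [Nat.factorial_succ, Nat.cast_mul, CharP.cast_eq_zero, zero_mul, add_zero,
        Nat.add_sub_add_right]
      refine sum_congr rfl fun j _ => ?_
      have : (j.factorial : ℝ) ≠ 0 := by positivity
      field_simp
      ring
    rw [mul_sum, sum_congr rfl euler_term, Nat.add_sub_cancel, shifted_sum, homogenizedTruncExp,
      mul_sum, ← sum_add_distrib]
    refine sum_congr rfl fun j hj => ?_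
    rw [Nat.cast_sub (by grind)]
    ring

theorem rtilde_eq_homogenizedTruncExp (x y : ℝ) {n : ℕ} (hn : n ≠ 0) :
    rtilde x y n = homogenizedTruncExp x (((n : ℝ) - 1) ^ 2 / 2 * y) n := by
  rw [rtilde, if_neg hn, homogenizedTruncExp]
  refine sum_nbij' (fun k => n - k) (fun j => n - j) ?_ ?_ ?_ ?_ fun k hk => ?_
  any_goals intro k hk; simp only [mem_Icc, mem_range] at hk ⊢; omega
  rw [Nat.sub_sub_self (mem_Icc.mp hk).2, mul_pow, div_pow, ← pow_mul]
  ring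

theorem rtilde_deriv_x (n : ℕ) (hn : 3 ≤ n) (x y : ℝ) :
    x * deriv (fun u : ℝ => rtilde u y n) x =
      (n : ℝ) * rtilde x y n -
        ((n : ℝ) - 1) ^ 2 * y / 2 *
          rtilde x (((n : ℝ) - 1) ^ 2 / ((n : ℝ) - 2) ^ 2 * y) (n - 1) := by
  have rescaled_param :
      (((n - 1 : ℕ) : ℝ) - 1) ^ 2 / 2 * (((n : ℝ) - 1) ^ 2 / ((n : ℝ) - 2) ^ 2 * y)
        = ((n : ℝ) - 1) ^ 2 / 2 * y := by
    have : (n : ℝ) - 2 ≠ 0 := by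
      have : (3 : ℝ) ≤ n := by exact_mod_cast hn
      linarith
    rw [Nat.cast_sub (by omega)]
    field_simp
    ring
  simp only [rtilde_eq_homogenizedTruncExp _ _ (show n ≠ 0 by omega),
    rtilde_eq_homogenizedTruncExp _ _ (show n - 1 ≠ 0 by omega), rescaled_param,
    mul_deriv_homogenizedTruncExp]
  ring
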